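/- arXiv:1611.09291 — 4 statements merged into one kernel-verified Lean document; each statement's English description precedes it below -/
import Mathlib

section
/- A connected bipartite graph G is 2-self-centered (every vertex has eccentricity exactly 2) if and only if G is isomorphic to a complete bipartite graph K_{n,m} with n, m ≥ 2. -/
open SimpleGraph

variable {V : Type*}

/-- Eccentricity of a vertex: maximum distance to any vertex. -/
noncomputable def gEcc [Fintype V] (G : SimpleGraph V) (v : V) : ℕ :=
  Finset.univ.sup fun u => G.dist v u

/-- Radius: minimum eccentricity. -/
noncomputable def gRad [Fintype V] [Nonempty V] (G : SimpleGraph V) : ℕ :=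
  Finset.univ.inf' Finset.univ_nonempty fun v => gEcc G v

/-- Diameter: maximum eccentricity. -/
noncomputable def gDiam [Fintype V] (G : SimpleGraph V) : ℕ :=
  Finset.univ.sup fun v => gEcc G v

/-- Center: vertices of minimum eccentricity. -/
def gCenter [Fintype V] [Nonempty V] (G : SimpleGraph V) : Set V :=
  {v | gEcc G v = gRad G}

/-- A labeling with labels in `Fin r` is distinguishing if the only
label-preserving automorphism is the identity. -/
def IsDistinguishing (G : SimpleGraph V) {r : ℕ} (f : V → Fin r) : Prop :=
  ∀ φ : G ≃g G, (∀ v, f (φ v) = f v) → ∀ v, φ v = v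

/-- The distinguishing number: least `r` admitting an `r`-distinguishing labeling. -/
noncomputable def distinguishingNumber (G : SimpleGraph V) : ℕ :=
  sInf {r | ∃ f : V → Fin r, IsDistinguishing G f}

/-!
With a 2-colouring of a connected graph, walks between equally coloured vertices have even
length, so two vertices at distance at most 2 are adjacent exactly when their colours differ.
Hence if every eccentricity is 2 the graph is complete bipartite between the colour classes, and
a vertex at distance 2 from `v` is a second vertex in the class of `v`. Conversely, in `K_{n,m}`
with `n, m ≥ 2`, distinct vertices on the same side are at distance 2 through the other side.
-/

namespace SimpleGraph

variable {G : SimpleGraph V} {u v : V}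

lemma gEcc_eq_two_iff [Fintype V] :
    gEcc G v = 2 ↔ (∀ u, G.dist v u ≤ 2) ∧ ∃ u, G.dist v u = 2 := by
  rw [gEcc, le_antisymm_iff, Finset.sup_le_iff,
    Finset.le_sup_iff (show (⊥ : ℕ) < 2 from two_pos)]
  simp only [Finset.mem_univ, true_implies, true_and]
  exact ⟨fun ⟨hle, u, hu⟩ => ⟨hle, u, le_antisymm (hle u) hu⟩,
    fun ⟨hle, u, hu⟩ => ⟨hle, u, hu.ge⟩⟩

lemma Reachable.dist_eq_two_iff (hr : G.Reachable u v) :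
    G.dist u v = 2 ↔ u ≠ v ∧ ¬G.Adj u v ∧ (G.commonNeighbors u v).Nonempty := by
  rw [← edist_eq_two_iff, ← hr.coe_dist_eq_edist]
  exact_mod_cast Iff.rfl

lemma Coloring.adj_of_dist_le_two (c : G.Coloring Bool) (hr : G.Reachable u v)
    (hd : G.dist u v ≤ 2) (hc : c u ≠ c v) : G.Adj u v := by
  obtain ⟨p, hp⟩ := hr.exists_walk_length_eq_dist
  have hodd : Odd p.length := (c.odd_length_iff_not_congr p).2 (by simpa [Bool.eq_not] using hc)
  rw [← dist_eq_one_iff_adj, ← hp]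
  obtain ⟨k, hk⟩ := hodd
  omega

def isoCompleteBipartiteGraphOfAdjIff {s : V → Bool} (hs : ∀ u v, G.Adj u v ↔ s u ≠ s v) :
    G ≃g completeBipartiteGraph {v // s v} {v // ¬s v} where
  toEquiv := (Equiv.sumCompl fun v => s v).symm
  map_rel_iff' {u v} := by
    rw [hs]
    by_cases hu : s u <;> by_cases hv : s v <;>
      simp [Equiv.sumCompl_symm_apply_of_pos, Equiv.sumCompl_symm_apply_of_neg, hu, hv]

/-- `G` is complete bipartite between the fibres of `s`, both of which have at least two
vertices. -/
structure IsCompleteBipartiteWith (G : SimpleGraph V) (s : V → Bool) : Prop where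
  adj_iff : ∀ u v, G.Adj u v ↔ s u ≠ s v
  surjective : Function.Surjective s
  exists_ne_eq : ∀ v, ∃ w ≠ v, s w = s v

namespace IsCompleteBipartiteWith

variable {s : V → Bool} (h : G.IsCompleteBipartiteWith s)
include h

lemma dist_eq_two (huv : u ≠ v) (hs : s u = s v) : G.dist u v = 2 := by
  obtain ⟨w, hw⟩ := h.surjective (!s u)
  have hwu : G.Adj u w := (h.adj_iff u w).2 (by simp [hw])
  have hwv : G.Adj w v := (h.adj_iff w v).2 (by simp [hw, hs])
  refine (hwu.reachable.trans hwv.reachable).dist_eq_two_iff.2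
    ⟨huv, fun huv' => (h.adj_iff u v).1 huv' hs, w, hwu, hwv.symm⟩

lemma gEcc_eq_two [Fintype V] (v : V) : gEcc G v = 2 := by
  refine gEcc_eq_two_iff.2 ⟨fun u => ?_, ?_⟩
  · rcases eq_or_ne v u with rfl | huv
    · simp
    by_cases hs : s v = s u
    · exact (h.dist_eq_two huv hs).le
    · rw [dist_eq_one_iff_adj.2 ((h.adj_iff v u).2 hs)]
      omega
  · obtain ⟨w, hwv, hs⟩ := h.exists_ne_eq v
    exact ⟨w, h.dist_eq_two hwv.symm hs.symm⟩

lemma nontrivial_fiber (b : Bool) : Nontrivial {v // s v = b} := by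
  obtain ⟨v, rfl⟩ := h.surjective b
  obtain ⟨w, hwv, hs⟩ := h.exists_ne_eq v
  exact ⟨⟨w, hs⟩, ⟨v, rfl⟩, fun hwv' => hwv (congrArg Subtype.val hwv')⟩

lemma exists_iso_fin [Fintype V] :
    ∃ n m : ℕ, 2 ≤ n ∧ 2 ≤ m ∧
      Nonempty (G ≃g completeBipartiteGraph (Fin n) (Fin m)) := by
  have := h.nontrivial_fiber true
  have : Nontrivial {v // ¬s v} := by simpa using h.nontrivial_fiber false
  exact ⟨_, _, Fintype.one_lt_card, Fintype.one_lt_card,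
    ⟨(isoCompleteBipartiteGraphOfAdjIff h.adj_iff).trans
      (completeBipartiteGraphCongr (Fintype.equivFin _) (Fintype.equivFin _))⟩⟩

end IsCompleteBipartiteWith

lemma Iso.isCompleteBipartiteWith {α β : Type*} [Nontrivial α] [Nontrivial β]
    (φ : G ≃g completeBipartiteGraph α β) :
    G.IsCompleteBipartiteWith fun v => (φ v).isLeft where
  adj_iff u v := by
    rw [← φ.map_adj_iff]
    cases φ u <;> cases φ v <;> simp
  surjective b := by
    cases b
    · exact ⟨φ.symm (.inr (Classical.arbitrary β)), by simp⟩
    · exact ⟨φ.symm (.inl (Classical.arbitrary α)), by simp⟩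
  exists_ne_eq v := by
    cases hv : φ v with
    | inl a =>
      obtain ⟨a', ha'⟩ := exists_ne a
      exact ⟨φ.symm (.inl a'), by simp [φ.symm_apply_eq, hv, ha'], by simp⟩
    | inr b =>
      obtain ⟨b', hb'⟩ := exists_ne b
      exact ⟨φ.symm (.inr b'), by simp [φ.symm_apply_eq, hv, hb'], by simp⟩

lemma isCompleteBipartiteWith_of_forall_gEcc_eq_two [Fintype V] (hG : G.Connected)
    (c : G.Coloring Bool) (hecc : ∀ v, gEcc G v = 2) : G.IsCompleteBipartiteWith c := by
  have hle (u v : V) : G.dist u v ≤ 2 := (gEcc_eq_two_iff.1 (hecc u)).1 v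
  have hfar (v : V) : ∃ w, G.dist v w = 2 := (gEcc_eq_two_iff.1 (hecc v)).2
  have adj_iff (u v : V) : G.Adj u v ↔ c u ≠ c v :=
    ⟨c.valid, c.adj_of_dist_le_two (hG u v) (hle u v)⟩
  refine ⟨adj_iff, fun b => ?_, fun v => ?_⟩
  · obtain ⟨v⟩ := hG.nonempty
    obtain ⟨w, hw⟩ := hfar v
    obtain ⟨-, -, x, hxv, -⟩ := ((hG v w).dist_eq_two_iff).1 hw
    by_cases hb : c v = b
    · exact ⟨v, hb⟩
    · exact ⟨x, (Bool.eq_not.2 ((adj_iff v x).1 hxv).symm).trans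
        (Bool.eq_not.2 (Ne.symm hb)).symm⟩
  · obtain ⟨w, hw⟩ := hfar v
    obtain ⟨hvw, hnadj, -⟩ := ((hG v w).dist_eq_two_iff).1 hw
    exact ⟨w, hvw.symm, by_contra fun hc => hnadj ((adj_iff v w).2 (Ne.symm hc))⟩

end SimpleGraph

theorem stmt4 [Fintype V] (G : SimpleGraph V) (hG : G.Connected)
    (hbip : G.Colorable 2) :
    (∀ v : V, gEcc G v = 2) ↔
      ∃ (n m : ℕ), 2 ≤ n ∧ 2 ≤ m ∧
        Nonempty (G ≃g completeBipartiteGraph (Fin n) (Fin m)) := by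
  constructor
  · intro hecc
    let c : G.Coloring Bool := recolorOfEquiv G finTwoEquiv hbip.some
    exact (isCompleteBipartiteWith_of_forall_gEcc_eq_two hG c hecc).exists_iso_fin
  · rintro ⟨n, m, hn, hm, ⟨φ⟩⟩
    have := Fin.nontrivial_iff_two_le.2 hn
    have := Fin.nontrivial_iff_two_le.2 hm
    exact φ.isCompleteBipartiteWith.gEcc_eq_two
end

section
/- If T is a tree of order n with diameter exactly 3, then the subgraph of the complement of T induced by the center of the complement of T is isomorphic to the complete graph K_{n-2}. -/
open SimpleGraph

variable {V : Type*}

lemma tree_path_dist' {G : SimpleGraph V} (hG : G.IsTree) {x y : V}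
    (p : G.Walk x y) (hp : p.IsPath) : G.dist x y = p.length := by
  obtain ⟨q, hq, hql⟩ := hG.isConnected.exists_path_of_dist x y
  have h : (⟨q, hq⟩ : G.Path x y) = ⟨p, hp⟩ := hG.IsAcyclic.path_unique _ _
  have h2 := congrArg (fun r : G.Path x y => r.1.length) h
  simp only at h2
  omega

theorem stmt6 [Fintype V] [Nonempty V] (T : SimpleGraph V) (hT : T.IsTree)
    (hd : gDiam T = 3) :
    Nonempty ((Tᶜ.induce (gCenter Tᶜ)) ≃g
      (⊤ : SimpleGraph (Fin (Fintype.card V - 2)))) := by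
  classical
  rw [gDiam] at hd
  have hdist3 : ∀ p q : V, T.dist p q ≤ 3 := by
    intro p q
    have h1 : gEcc T p ≤ 3 := hd ▸ Finset.le_sup (Finset.mem_univ p)
    exact le_trans (Finset.le_sup (Finset.mem_univ q)) h1
  obtain ⟨x, -, hx⟩ := Finset.exists_mem_eq_sup Finset.univ Finset.univ_nonempty
    (fun v => gEcc T v)
  obtain ⟨y, -, hy⟩ := Finset.exists_mem_eq_sup Finset.univ Finset.univ_nonempty
    (fun u => T.dist x u)
  have hxy : T.dist x y = 3 := by
    have h3 : gEcc T x = 3 := by rw [← hd, hx]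
    rw [gEcc] at h3; rw [← hy]; exact h3
  obtain ⟨p, hp, hplen⟩ := hT.isConnected.exists_path_of_dist x y
  rw [hxy] at hplen
  set a := p.getVert 1 with ha
  set b := p.getVert 2 with hb
  have hxa : T.Adj x a := by
    have := p.adj_getVert_succ (i := 0) (by omega)
    rwa [p.getVert_zero] at this
  have hab : T.Adj a b := p.adj_getVert_succ (i := 1) (by omega)
  have hby : T.Adj b y := by
    have := p.adj_getVert_succ (i := 2) (by omega)
    rwa [show (2:ℕ)+1 = p.length by omega, p.getVert_length] at this
  clear_value a b
  clear ha hb hp hplen p hx hy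
  -- basic distance facts
  have hxb2 : 2 ≤ T.dist x b := by
    have h1 := hT.isConnected.dist_triangle (u := x) (v := b) (w := y)
    have h2 : T.dist b y ≤ 1 := by
      rw [show (1:ℕ) = (Walk.cons hby Walk.nil).length by simp]
      exact dist_le _
    omega
  have hay2 : 2 ≤ T.dist a y := by
    have h1 := hT.isConnected.dist_triangle (u := x) (v := a) (w := y)
    have h2 : T.dist x a ≤ 1 := by
      rw [show (1:ℕ) = (Walk.cons hxa Walk.nil).length by simp]
      exact dist_le _
    omega
  have hxb : x ≠ b := by rintro rfl; rw [SimpleGraph.dist_self] at hxb2; omega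
  have hay : a ≠ y := by rintro rfl; rw [SimpleGraph.dist_self] at hay2; omega
  have hxy' : x ≠ y := by rintro rfl; rw [SimpleGraph.dist_self] at hxy; omega
  -- x's only neighbor is a
  have hNx : ∀ z, T.Adj x z → z = a := by
    intro z hz
    by_contra hza
    have hd1 : T.dist x z = 1 := by
      rw [tree_path_dist' hT (Walk.cons hz Walk.nil) (by simp [hz.ne])]; simp
    have hzb : z ≠ b := by rintro rfl; omega
    have hzy : z ≠ y := by rintro rfl; omega
    have hw : (Walk.cons hby.symm (Walk.cons hab.symm (Walk.cons hxa.symm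
        (Walk.cons hz Walk.nil)))).IsPath := by
      simp [Walk.isPath_def]
      exact ⟨⟨hby.ne', hay.symm, hxy'.symm, hzy.symm⟩, ⟨hab.ne', hxb.symm, hzb.symm⟩,
        ⟨hxa.ne', Ne.symm hza⟩, hz.ne⟩
    have h4 := tree_path_dist' hT _ hw
    have h5 := hdist3 y z
    simp at h4; omega
  -- y's only neighbor is b
  have hNy : ∀ z, T.Adj y z → z = b := by
    intro z hz
    by_contra hzb
    have hd1 : T.dist y z = 1 := by
      rw [tree_path_dist' hT (Walk.cons hz Walk.nil) (by simp [hz.ne])]; simp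
    have hza : z ≠ a := by
      intro h
      rw [h] at hd1
      rw [SimpleGraph.dist_comm] at hd1
      omega
    have hzx : z ≠ x := by
      intro h
      rw [h] at hd1
      rw [SimpleGraph.dist_comm] at hd1
      omega
    have hw : (Walk.cons hxa (Walk.cons hab (Walk.cons hby
        (Walk.cons hz Walk.nil)))).IsPath := by
      simp [Walk.isPath_def]
      exact ⟨⟨hxa.ne, hxb, hxy', hzx.symm⟩, ⟨hab.ne, hay, hza.symm⟩,
        ⟨hby.ne, Ne.symm hzb⟩, hz.ne⟩
    have h4 := tree_path_dist' hT _ hw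
    have h5 := hdist3 x z
    simp at h4; omega
  -- no vertex adjacent to both a and b
  have hboth : ∀ w, ¬(T.Adj a w ∧ T.Adj b w) := by
    rintro w ⟨h1, h2⟩
    have d1 : T.dist a b = 1 := by
      rw [tree_path_dist' hT (Walk.cons hab Walk.nil) (by simp [hab.ne])]; simp
    have d2 : T.dist a b = 2 := by
      rw [tree_path_dist' hT (Walk.cons h1 (Walk.cons h2.symm Walk.nil))
        (by simp [Walk.isPath_def]; exact ⟨⟨h1.ne, hab.ne⟩, h2.ne'⟩)]
      simp
    omega
  -- every other vertex is adjacent to a or b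
  have hnear : ∀ w, w ≠ a → w ≠ b → T.Adj a w ∨ T.Adj b w := by
    intro w hwa hwb
    by_cases hwx : w = x
    · exact Or.inl (hwx ▸ hxa.symm)
    by_cases hwy : w = y
    · exact Or.inr (hwy ▸ hby)
    -- dist a w ≤ 2
    have hdaw : T.dist a w ≤ 2 := by
      obtain ⟨r, hr, hrl⟩ := hT.isConnected.exists_path_of_dist x w
      have hle := hdist3 x w
      cases r with
      | nil => exact absurd rfl (Ne.symm hwx)
      | cons hadj r' =>
        obtain rfl := hNx _ hadj
        have hr' : r'.IsPath := ((Walk.cons_isPath_iff _ _).mp hr).1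
        have := tree_path_dist' hT r' hr'
        simp [Walk.length_cons] at hrl
        omega
    have hdbw : T.dist b w ≤ 2 := by
      obtain ⟨r, hr, hrl⟩ := hT.isConnected.exists_path_of_dist y w
      have hle := hdist3 y w
      cases r with
      | nil => exact absurd rfl (Ne.symm hwy)
      | cons hadj r' =>
        obtain rfl := hNy _ hadj
        have hr' : r'.IsPath := ((Walk.cons_isPath_iff _ _).mp hr).1
        have := tree_path_dist' hT r' hr'
        simp [Walk.length_cons] at hrl
        omega
    by_contra hcon
    push_neg at hcon
    obtain ⟨hna, hnb⟩ := hcon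
    have hdaw2 : T.dist a w = 2 := by
      have h0 : 0 < T.dist a w :=
        hT.isConnected.pos_dist_of_ne (Ne.symm hwa)
      have h1 : T.dist a w ≠ 1 := fun h => hna ((dist_eq_one_iff_adj).mp h)
      omega
    obtain ⟨q, hq, hql⟩ := hT.isConnected.exists_path_of_dist a w
    rw [hdaw2] at hql
    set s := q.getVert 1 with hs
    have has : T.Adj a s := by
      have := q.adj_getVert_succ (i := 0) (by omega)
      rwa [q.getVert_zero] at this
    have hsw : T.Adj s w := by
      have := q.adj_getVert_succ (i := 1) (by omega)
      rwa [show (1:ℕ)+1 = q.length by omega, q.getVert_length] at this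
    clear_value s
    have hsb : s ≠ b := by rintro rfl; exact hnb hsw
    have hw3 : (Walk.cons hab.symm (Walk.cons has (Walk.cons hsw Walk.nil))).IsPath := by
      simp [Walk.isPath_def]
      exact ⟨⟨hab.ne', hsb.symm, Ne.symm hwb⟩, ⟨has.ne, Ne.symm hwa⟩, hsw.ne⟩
    have := tree_path_dist' hT _ hw3
    simp at this; omega
  -- non-central vertices are pairwise non-adjacent
  have honly : ∀ w w', w ≠ a → w ≠ b → w' ≠ a → w' ≠ b → w ≠ w' → ¬T.Adj w w' := by
    intro w w' hwa hwb hw'a hw'b hww' hadj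
    rcases hnear w hwa hwb with h1 | h1 <;> rcases hnear w' hw'a hw'b with h2 | h2
    · have d1 : T.dist a w' = 1 := by
        rw [tree_path_dist' hT (Walk.cons h2 Walk.nil) (by simp [h2.ne])]; simp
      have d2 : T.dist a w' = 2 := by
        rw [tree_path_dist' hT (Walk.cons h1 (Walk.cons hadj Walk.nil))
          (by simp [Walk.isPath_def]; exact ⟨⟨h1.ne, h2.ne⟩, hww'⟩)]
        simp
      omega
    · -- w adj a, w' adj b : paths a-b-w' and a-w-w'
      have hp1 : (Walk.cons hab (Walk.cons h2 Walk.nil)).IsPath := by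
        simp [Walk.isPath_def]; exact ⟨⟨hab.ne, Ne.symm hw'a⟩, h2.ne⟩
      have hp2 : (Walk.cons h1 (Walk.cons hadj Walk.nil)).IsPath := by
        simp [Walk.isPath_def]; exact ⟨⟨h1.ne, Ne.symm hw'a⟩, hww'⟩
      have heq := hT.IsAcyclic.path_unique ⟨_, hp1⟩ ⟨_, hp2⟩
      have h5 := congrArg (fun r : T.Path a w' => r.1.getVert 1) heq
      simp [Walk.getVert_cons_succ] at h5
      exact hwb h5.symm
    · -- w adj b, w' adj a : paths b-a-w' and b-w-w'
      have hp1 : (Walk.cons hab.symm (Walk.cons h2 Walk.nil)).IsPath := by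
        simp [Walk.isPath_def]; exact ⟨⟨hab.ne', Ne.symm hw'b⟩, h2.ne⟩
      have hp2 : (Walk.cons h1 (Walk.cons hadj Walk.nil)).IsPath := by
        simp [Walk.isPath_def]; exact ⟨⟨h1.ne, Ne.symm hw'b⟩, hww'⟩
      have heq := hT.IsAcyclic.path_unique ⟨_, hp1⟩ ⟨_, hp2⟩
      have h5 := congrArg (fun r : T.Path b w' => r.1.getVert 1) heq
      simp [Walk.getVert_cons_succ] at h5
      exact hwa h5.symm
    · have d1 : T.dist b w' = 1 := by
        rw [tree_path_dist' hT (Walk.cons h2 Walk.nil) (by simp [h2.ne])]; simp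
      have d2 : T.dist b w' = 2 := by
        rw [tree_path_dist' hT (Walk.cons h1 (Walk.cons hadj Walk.nil))
          (by simp [Walk.isPath_def]; exact ⟨⟨h1.ne, h2.ne⟩, hww'⟩)]
        simp
      omega
  -- the set of non-central vertices
  set C : Set V := {w | w ≠ a ∧ w ≠ b} with hCdef
  have hmemC : ∀ w : V, w ∈ C ↔ w ≠ a ∧ w ≠ b := fun w => Iff.rfl
  have hCadj : ∀ w w' : V, w ∈ C → w' ∈ C → w ≠ w' → Tᶜ.Adj w w' := by
    intro w w' hw hw' hne
    rw [compl_adj]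
    exact ⟨hne, honly w w' ((hmemC w).mp hw).1 ((hmemC w).mp hw).2
      ((hmemC w').mp hw').1 ((hmemC w').mp hw').2 hne⟩
  have hxC : x ∈ C := (hmemC x).mpr ⟨hxa.ne, hxb⟩
  have hyC : y ∈ C := (hmemC y).mpr ⟨Ne.symm hay, hby.ne'⟩
  have hnay : ¬T.Adj a y := fun h => hboth y ⟨h, hby⟩
  have hnbx : ¬T.Adj b x := fun h => hboth x ⟨hxa.symm, h⟩
  have hcay : Tᶜ.Adj a y := by rw [compl_adj]; exact ⟨hay, hnay⟩
  have hcbx : Tᶜ.Adj b x := by rw [compl_adj]; exact ⟨Ne.symm hxb, hnbx⟩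
  -- distances in the complement from non-central vertices are at most 2
  have f2 : ∀ w ∈ C, ∀ z, Tᶜ.dist w z ≤ 2 := by
    intro w hw z
    obtain ⟨hwa, hwb⟩ := (hmemC w).mp hw
    by_cases hza : z = a
    · rw [hza]
      by_cases hadj : T.Adj a w
      · have hwy : w ≠ y := fun h => hnay (h ▸ hadj)
        have w1 : Tᶜ.Adj w y := hCadj w y hw hyC hwy
        have h := dist_le (Walk.cons w1 (Walk.cons hcay.symm Walk.nil))
        simpa using h
      · have w1 : Tᶜ.Adj w a := by
          rw [compl_adj]; exact ⟨hwa, fun h => hadj h.symm⟩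
        have h := dist_le (Walk.cons w1 Walk.nil)
        simp at h; omega
    · by_cases hzb : z = b
      · rw [hzb]
        by_cases hadj : T.Adj b w
        · have hwx : w ≠ x := fun h => hnbx (h ▸ hadj)
          have w1 : Tᶜ.Adj w x := hCadj w x hw hxC hwx
          have h := dist_le (Walk.cons w1 (Walk.cons hcbx.symm Walk.nil))
          simpa using h
        · have w1 : Tᶜ.Adj w b := by
            rw [compl_adj]; exact ⟨hwb, fun h => hadj h.symm⟩
          have h := dist_le (Walk.cons w1 Walk.nil)
          simp at h; omega
      · by_cases hwz : w = z
        · rw [hwz]; simp [SimpleGraph.dist_self]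
        · have w1 : Tᶜ.Adj w z := hCadj w z hw ((hmemC z).mpr ⟨hza, hzb⟩) hwz
          have h := dist_le (Walk.cons w1 Walk.nil)
          simp at h; omega
  -- eccentricity of non-central vertices in the complement is 2
  have f3 : ∀ w ∈ C, gEcc Tᶜ w = 2 := by
    intro w hw
    obtain ⟨hwa, hwb⟩ := (hmemC w).mp hw
    have hub : gEcc Tᶜ w ≤ 2 := Finset.sup_le fun z _ => f2 w hw z
    have hlb : 2 ≤ gEcc Tᶜ w := by
      rcases hnear w hwa hwb with h1 | h1
      · have hwy : w ≠ y := fun h => hnay (h ▸ h1)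
        have hreach : Tᶜ.Reachable w a :=
          ⟨Walk.cons (hCadj w y hw hyC hwy) (Walk.cons hcay.symm Walk.nil)⟩
        have h0 : 0 < Tᶜ.dist w a := hreach.pos_dist_of_ne hwa
        have hne1 : Tᶜ.dist w a ≠ 1 := by
          intro h
          have h2 := (dist_eq_one_iff_adj).mp h
          rw [compl_adj] at h2
          exact h2.2 h1.symm
        have h3 : 2 ≤ Tᶜ.dist w a := by omega
        exact le_trans h3 (Finset.le_sup (Finset.mem_univ a))
      · have hwx : w ≠ x := fun h => hnbx (h ▸ h1)
        have hreach : Tᶜ.Reachable w b :=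
          ⟨Walk.cons (hCadj w x hw hxC hwx) (Walk.cons hcbx.symm Walk.nil)⟩
        have h0 : 0 < Tᶜ.dist w b := hreach.pos_dist_of_ne hwb
        have hne1 : Tᶜ.dist w b ≠ 1 := by
          intro h
          have h2 := (dist_eq_one_iff_adj).mp h
          rw [compl_adj] at h2
          exact h2.2 h1.symm
        have h3 : 2 ≤ Tᶜ.dist w b := by omega
        exact le_trans h3 (Finset.le_sup (Finset.mem_univ b))
    omega
  -- a and b are far apart in the complement
  have fa : 3 ≤ Tᶜ.dist a b := by
    have hreach : Tᶜ.Reachable a b :=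
      ⟨Walk.cons hcay (Walk.cons (hCadj y x hyC hxC (Ne.symm hxy'))
        (Walk.cons hcbx.symm Walk.nil))⟩
    have h0 : 0 < Tᶜ.dist a b := hreach.pos_dist_of_ne hab.ne
    have hne1 : Tᶜ.dist a b ≠ 1 := by
      intro h
      have h2 := (dist_eq_one_iff_adj).mp h
      rw [compl_adj] at h2
      exact h2.2 hab
    have hne2 : Tᶜ.dist a b ≠ 2 := by
      intro h2
      obtain ⟨q, hql⟩ := hreach.exists_walk_length_eq_dist
      rw [h2] at hql
      have hs1 : Tᶜ.Adj a (q.getVert 1) := by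
        have h := q.adj_getVert_succ (i := 0) (by omega)
        rwa [q.getVert_zero] at h
      have hs2 : Tᶜ.Adj (q.getVert 1) b := by
        have h := q.adj_getVert_succ (i := 1) (by omega)
        rwa [show (1:ℕ)+1 = q.length by omega, q.getVert_length] at h
      rw [compl_adj] at hs1 hs2
      rcases hnear (q.getVert 1) (Ne.symm hs1.1) hs2.1 with h | h
      · exact hs1.2 h
      · exact hs2.2 h.symm
    omega
  have fecca : 3 ≤ gEcc Tᶜ a := le_trans fa (Finset.le_sup (Finset.mem_univ b))
  have feccb : 3 ≤ gEcc Tᶜ b := by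
    have h : 3 ≤ Tᶜ.dist b a := by rw [SimpleGraph.dist_comm]; exact fa
    exact le_trans h (Finset.le_sup (Finset.mem_univ a))
  -- the radius of the complement is 2
  have hrad : gRad Tᶜ = 2 := by
    apply le_antisymm
    · calc gRad Tᶜ ≤ gEcc Tᶜ x := Finset.inf'_le _ (Finset.mem_univ x)
        _ = 2 := f3 x hxC
    · rw [gRad]
      apply Finset.le_inf'
      intro v _
      by_cases hva : v = a
      · subst hva; omega
      · by_cases hvb : v = b
        · subst hvb; omega
        · rw [f3 v ((hmemC v).mpr ⟨hva, hvb⟩)]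
  -- the center of the complement is C
  have hcenter : gCenter Tᶜ = C := by
    ext w
    rw [hmemC]
    simp only [gCenter, Set.mem_setOf_eq, hrad]
    constructor
    · intro h
      constructor
      · rintro rfl; omega
      · rintro rfl; omega
    · intro hw
      exact f3 w ((hmemC w).mpr hw)
  -- cardinality of the center
  have hcard : Fintype.card ↥(gCenter Tᶜ) = Fintype.card V - 2 := by
    have h1 : gCenter Tᶜ = ({a, b} : Set V)ᶜ := by
      rw [hcenter]
      ext w
      rw [hmemC]
      simp only [Set.mem_compl_iff, Set.mem_insert_iff, Set.mem_singleton_iff]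
      push_neg
      rfl
    have h2 : Fintype.card ↥({a, b} : Set V) = 2 := by
      rw [← Set.toFinset_card, Set.toFinset_insert, Set.toFinset_singleton,
        Finset.card_insert_of_notMem (by simp [hab.ne])]
      simp
    rw [h1, Fintype.card_compl_set, h2]
  -- build the isomorphism
  have e : ↥(gCenter Tᶜ) ≃ Fin (Fintype.card V - 2) := Fintype.equivFinOfCardEq hcard
  refine ⟨{ toEquiv := e, map_rel_iff' := ?_ }⟩
  intro p q
  simp only [top_adj, ne_eq, EmbeddingLike.apply_eq_iff_eq, comap_adj,
    Function.Embedding.coe_subtype]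
  constructor
  · intro hne
    have hp := (Set.ext_iff.mp hcenter ↑p).mp p.2
    have hq := (Set.ext_iff.mp hcenter ↑q).mp q.2
    exact hCadj _ _ hp hq (fun h => hne (Subtype.ext h))
  · intro h hpq
    exact h.ne (by rw [hpq])
end

section
/- If T is a tree with radius at least 3 and distinguishing number 2, then the complement of T is a connected graph in which every vertex has eccentricity exactly 2, and the complement of T is not bipartite. -/
open SimpleGraph

variable {V : Type*}

private lemma walk_to_getVert {G : SimpleGraph V} {u v : V} (p : G.Walk u v) (i : ℕ) :
    ∃ q : G.Walk u (p.getVert i), q.length ≤ i := by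
  induction p generalizing i with
  | nil => exact ⟨Walk.nil, by simp⟩
  | cons h p ih =>
    cases i with
    | zero => exact ⟨Walk.nil.copy rfl (Walk.getVert_zero _).symm, by simp⟩
    | succ i =>
      obtain ⟨q, hq⟩ := ih i
      exact ⟨(q.cons h).copy rfl (Walk.getVert_cons_succ _ _).symm,
        by simpa using Nat.succ_le_succ hq⟩

private lemma walk_from_getVert {G : SimpleGraph V} {u v : V} (p : G.Walk u v) (i : ℕ) :
    ∃ q : G.Walk (p.getVert i) v, q.length ≤ p.length - i := by
  induction p generalizing i with
  | nil => exact ⟨Walk.nil, by simp⟩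
  | cons h p ih =>
    cases i with
    | zero => exact ⟨(p.cons h).copy (Walk.getVert_zero _).symm rfl, by simp⟩
    | succ i =>
      obtain ⟨q, hq⟩ := ih i
      exact ⟨q.copy (Walk.getVert_cons_succ _ _).symm rfl, by simpa using hq⟩

theorem stmt13 [Fintype V] [Nonempty V] (T : SimpleGraph V) (hT : T.IsTree)
    (hr : 3 ≤ gRad T) (hD : distinguishingNumber T = 2) :
    Tᶜ.Connected ∧ (∀ v : V, gEcc Tᶜ v = 2) ∧ ¬ Tᶜ.Colorable 2 := by
  classical
  have hconn : T.Connected := hT.isConnected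
  have hecc3 : ∀ v : V, 3 ≤ gEcc T v := fun v =>
    le_trans hr (Finset.inf'_le _ (Finset.mem_univ v))
  have far : ∀ v : V, ∃ u : V, 3 ≤ T.dist v u := by
    intro v
    obtain ⟨u, -, hu⟩ := Finset.exists_mem_eq_sup Finset.univ Finset.univ_nonempty
      (fun u => T.dist v u)
    have h3 := hecc3 v
    rw [gEcc, hu] at h3
    exact ⟨u, h3⟩
  -- short walks in the complement
  have key : ∀ u v : V, u ≠ v → ∃ p : Tᶜ.Walk u v, p.length ≤ 2 := by
    intro u v huv
    by_cases hadj : T.Adj u v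
    · have hw : ∃ w, ¬(w = u ∨ w = v ∨ T.Adj u w ∨ T.Adj v w) := by
        by_contra h
        push_neg at h
        have h2 : ∀ x, T.dist u x ≤ 2 := by
          intro x
          rcases h x with rfl | rfl | hx | hx
          · simp [SimpleGraph.dist_self]
          · exact le_trans (SimpleGraph.dist_le hadj.toWalk) (by simp [Adj.toWalk])
          · exact le_trans (SimpleGraph.dist_le hx.toWalk) (by simp [Adj.toWalk])
          · exact le_trans (SimpleGraph.dist_le (hx.toWalk.cons hadj)) (by simp [Adj.toWalk])
        have hle : gEcc T u ≤ 2 := Finset.sup_le fun x _ => h2 x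
        have := hecc3 u
        omega
      obtain ⟨w, hw⟩ := hw
      push_neg at hw
      obtain ⟨hw1, hw2, hw3, hw4⟩ := hw
      have a1 : Tᶜ.Adj u w := ⟨Ne.symm hw1, hw3⟩
      have a2 : Tᶜ.Adj w v := ⟨hw2, fun h => hw4 h.symm⟩
      exact ⟨a2.toWalk.cons a1, by simp [Adj.toWalk]⟩
    · exact ⟨(show Tᶜ.Adj u v from ⟨huv, hadj⟩).toWalk, by simp [Adj.toWalk]⟩
  have hpre : Tᶜ.Preconnected := by
    intro u v
    by_cases h : u = v
    · exact h ▸ Reachable.refl u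
    · obtain ⟨p, -⟩ := key u v h
      exact ⟨p⟩
  have hCconn : Tᶜ.Connected := ⟨hpre⟩
  have hdist2 : ∀ u v : V, Tᶜ.dist u v ≤ 2 := by
    intro u v
    by_cases h : u = v
    · subst h; simp [SimpleGraph.dist_self]
    · obtain ⟨p, hp⟩ := key u v h
      exact le_trans (SimpleGraph.dist_le p) hp
  refine ⟨hCconn, ?_, ?_⟩
  · -- eccentricity exactly 2
    intro v
    refine le_antisymm (Finset.sup_le fun u _ => hdist2 v u) ?_
    obtain ⟨u, hu3⟩ := far v
    have hreach : T.Reachable v u := Reachable.of_dist_ne_zero (by omega)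
    obtain ⟨p, hp⟩ := hreach.exists_walk_length_eq_dist
    have hlen : 0 < p.length := by omega
    have hadj : T.Adj v (p.getVert 1) := by
      have := p.adj_getVert_succ hlen
      rwa [p.getVert_zero] at this
    have hne : v ≠ p.getVert 1 := hadj.ne
    have hpos : 0 < Tᶜ.dist v (p.getVert 1) := (hpre v _).pos_dist_of_ne hne
    have hnot1 : Tᶜ.dist v (p.getVert 1) ≠ 1 := by
      intro h1
      exact (SimpleGraph.dist_eq_one_iff_adj.mp h1).2 hadj
    have h2le : 2 ≤ Tᶜ.dist v (p.getVert 1) := by omega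
    exact le_trans h2le (Finset.le_sup (Finset.mem_univ (p.getVert 1)))
  · -- not 2-colorable
    rintro ⟨c⟩
    have clique : ∀ a b : V, a ≠ b → c a = c b → T.Adj a b := by
      intro a b hab hcab
      by_contra h
      exact c.valid ⟨hab, h⟩ hcab
    have notri : ∀ a b d : V, a ≠ b → a ≠ d → b ≠ d →
        T.Adj a b → T.Adj b d → T.Adj a d → False := by
      intro a b d hab had hbd h1 h2 h3
      have p2path : (h2.symm.toWalk.cons h3).IsPath := by
        simp [Walk.isPath_def, Adj.toWalk, hab, had, hbd.symm]
      have heq := hT.IsAcyclic.path_unique (Path.singleton h1) ⟨h2.symm.toWalk.cons h3, p2path⟩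
      have hlen := congrArg (fun q : T.Path a b => q.1.length) heq
      simp only [Path.singleton, Adj.toWalk, Walk.length_cons, Walk.length_nil] at hlen
      omega
    have fib : ∀ i : Fin 2, (Finset.univ.filter (fun x => c x = i)).card ≤ 2 := by
      intro i
      by_contra hgt
      push_neg at hgt
      obtain ⟨a, ha, b, hb, d, hd, hab, had, hbd⟩ := Finset.two_lt_card.mp hgt
      simp only [Finset.mem_filter] at ha hb hd
      exact notri a b d hab had hbd (clique a b hab (ha.2.trans hb.2.symm))
        (clique b d hbd (hb.2.trans hd.2.symm)) (clique a d had (ha.2.trans hd.2.symm))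
    have hcard4 : Fintype.card V ≤ 4 := by
      have heq : (Finset.univ : Finset V).card =
          ∑ i : Fin 2, (Finset.univ.filter (fun x => c x = i)).card :=
        Finset.card_eq_sum_card_fiberwise (fun x _ => Finset.mem_univ (c x))
      rw [Fintype.card, heq]
      calc ∑ i : Fin 2, (Finset.univ.filter (fun x => c x = i)).card
          ≤ ∑ _i : Fin 2, 2 := Finset.sum_le_sum fun i _ => fib i
        _ = 4 := by simp
    -- construct five distinct vertices
    obtain ⟨v⟩ := ‹Nonempty V›
    obtain ⟨u, hu3⟩ := far v
    obtain ⟨p, hp⟩ := (hconn v u).exists_walk_length_eq_dist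
    have hdvi : ∀ i : ℕ, i ≤ 3 → T.dist v (p.getVert i) = i := by
      intro i hi
      obtain ⟨q1, hq1⟩ := walk_to_getVert p i
      obtain ⟨q2, hq2⟩ := walk_from_getVert p i
      have h1 : T.dist v (p.getVert i) ≤ i := le_trans (SimpleGraph.dist_le q1) hq1
      have h2 : T.dist (p.getVert i) u ≤ p.length - i := le_trans (SimpleGraph.dist_le q2) hq2
      have h3 := hconn.dist_triangle (u := v) (v := p.getVert i) (w := u)
      omega
    set q1 := p.getVert 1 with hq1def
    set q2 := p.getVert 2 with hq2def
    set q3 := p.getVert 3 with hq3def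
    have d1 : T.dist v q1 = 1 := hdvi 1 (by norm_num)
    have d2 : T.dist v q2 = 2 := hdvi 2 (by norm_num)
    have d3 : T.dist v q3 = 3 := hdvi 3 (by norm_num)
    have a12 : T.Adj q1 q2 := p.adj_getVert_succ (by omega)
    have a23 : T.Adj q2 q3 := p.adj_getVert_succ (by omega)
    obtain ⟨w, hw3⟩ := far q1
    have dw0 : T.dist q1 v ≤ 1 := by rw [SimpleGraph.dist_comm]; omega
    have dw2 : T.dist q1 q2 ≤ 1 := SimpleGraph.dist_le a12.toWalk
    have dw3 : T.dist q1 q3 ≤ 2 := SimpleGraph.dist_le (a23.toWalk.cons a12)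
    have nv1 : v ≠ q1 := fun h => by rw [← h, SimpleGraph.dist_self] at d1; omega
    have nv2 : v ≠ q2 := fun h => by rw [← h, SimpleGraph.dist_self] at d2; omega
    have nv3 : v ≠ q3 := fun h => by rw [← h, SimpleGraph.dist_self] at d3; omega
    have n12 : q1 ≠ q2 := fun h => by rw [← h] at d2; omega
    have n13 : q1 ≠ q3 := fun h => by rw [← h] at d3; omega
    have n23 : q2 ≠ q3 := fun h => by rw [← h] at d3; omega
    have nwv : w ≠ v := fun h => by rw [h] at hw3; omega
    have nw1 : w ≠ q1 := fun h => by
      rw [h, SimpleGraph.dist_self] at hw3; omega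
    have nw2 : w ≠ q2 := fun h => by rw [h] at hw3; omega
    have nw3 : w ≠ q3 := fun h => by rw [h] at hw3; omega
    have h5 : ({v, q1, q2, q3, w} : Finset V).card = 5 := by
      rw [Finset.card_insert_of_notMem (by simp [nv1, nv2, nv3, nwv.symm]),
        Finset.card_insert_of_notMem (by simp [n12, n13, nw1.symm]),
        Finset.card_insert_of_notMem (by simp [n23, nw2.symm]),
        Finset.card_insert_of_notMem (by simp [nw3.symm]),
        Finset.card_singleton]
    have := Finset.card_le_univ ({v, q1, q2, q3, w} : Finset V)
    rw [h5] at this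
    omega
end

section
/- If T is a bicentral tree with centers c1, c2, and T' is the rooted tree obtained by deleting the edge c1c2 and adding a new vertex r adjacent to both c1 and c2, then D(T) = D(T'). -/
open SimpleGraph

variable {V : Type*}

/-- The rooted tree obtained from `T` by deleting the edge `c₁c₂` and adding
a new root vertex (`none`) adjacent to both `c₁` and `c₂`. -/
def addRoot (T : SimpleGraph V) (c₁ c₂ : V) : SimpleGraph (Option V) :=
  SimpleGraph.fromRel (fun x y =>
    (∃ a b : V, x = some a ∧ y = some b ∧ T.Adj a b ∧
      ¬(a = c₁ ∧ b = c₂) ∧ ¬(a = c₂ ∧ b = c₁)) ∨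
    (x = none ∧ (y = some c₁ ∨ y = some c₂)))

/-!
Every automorphism of `addRoot T c₁ c₂` fixes the root: the root has eccentricity at most
`rad T`, while every other vertex has eccentricity above `rad T`. For a non-central vertex this
is because distances in `T` do not shrink in the new tree; for `c₁` it is because a vertex `v`
at distance `rad T` from `c₁` lies behind the bridge `c₁c₂`, so a walk from `c₁` to `v` avoiding
that edge must pass through the root. Hence automorphisms of the new tree are exactly the
extensions of automorphisms of `T`, which preserve the centre `{c₁, c₂}`, and distinguishing
labelings correspond by restriction and by extension with an arbitrary label at the root.
-/

namespace SimpleGraph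

variable {W : Type*} {G : SimpleGraph V} {H : SimpleGraph W}

lemma edist_map_le (f : G →g H) (u v : V) : H.edist (f u) (f v) ≤ G.edist u v := by
  by_cases hr : G.Reachable u v
  · obtain ⟨p, hp⟩ := hr.exists_walk_length_eq_edist
    rw [← hp, ← p.length_map f]
    exact edist_le _
  · rw [edist_eq_top_of_not_reachable hr]
    exact le_top

lemma Iso.dist_apply (φ : G ≃g H) (u v : V) : H.dist (φ u) (φ v) = G.dist u v := by
  have h : H.edist (φ u) (φ v) = G.edist u v := by
    refine le_antisymm (edist_map_le φ.toHom u v) ?_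
    simpa using edist_map_le φ.symm.toHom (φ u) (φ v)
  rw [dist, dist, h]

lemma Walk.le_add_length {f : V → ℕ} (hf : ∀ ⦃x y⦄, G.Adj x y → f y ≤ f x + 1) {x y : V}
    (p : G.Walk x y) : f y ≤ f x + p.length := by
  induction p with
  | nil => simp
  | cons h _ ih =>
    have := hf h
    rw [Walk.length_cons]
    omega

lemma Reachable.le_add_dist {f : V → ℕ} (hf : ∀ ⦃x y⦄, G.Adj x y → f y ≤ f x + 1) {x y : V}
    (h : G.Reachable x y) : f y ≤ f x + G.dist x y := by
  obtain ⟨p, hp⟩ := h.exists_walk_length_eq_dist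
  exact hp ▸ p.le_add_length hf

lemma Walk.dist_add_dist_le_length {u v w : V} (p : G.Walk u w) (hv : v ∈ p.support) :
    G.dist u v + G.dist v w ≤ p.length := by
  classical
  rw [← p.take_spec hv, Walk.length_append]
  exact Nat.add_le_add (dist_le _) (dist_le _)

lemma exists_deleteEdges_walk_of_dist_lt (hG : G.Connected) {c c' u : V} (hadj : G.Adj c c')
    (h : G.dist c u < G.dist c' u) :
    ∃ p : (G.deleteEdges {s(c, c')}).Walk c u, p.length = G.dist c u := by
  obtain ⟨p, hp⟩ := (hG c u).exists_walk_length_eq_dist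
  have hc' : c' ∉ p.support := fun hc' => by
    have := p.dist_add_dist_le_length hc'
    rw [dist_eq_one_iff_adj.mpr hadj] at this
    omega
  have he : s(c, c') ∉ p.edges := fun he => hc' (p.snd_mem_support_of_mem_edges he)
  exact ⟨p.toDeleteEdge _ he, by rw [Walk.length_transfer, hp]⟩

end SimpleGraph

section Eccentricity

variable {W : Type*} [Fintype V] [Fintype W] {G : SimpleGraph V} {H : SimpleGraph W}

lemma dist_le_gEcc (v u : V) : G.dist v u ≤ gEcc G v :=
  Finset.le_sup (Finset.mem_univ u)

lemma exists_dist_eq_gEcc [Nonempty V] (v : V) : ∃ u, G.dist v u = gEcc G v := by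
  obtain ⟨u, -, hu⟩ := Finset.exists_mem_eq_sup Finset.univ Finset.univ_nonempty (G.dist v)
  exact ⟨u, hu.symm⟩

lemma gRad_le_gEcc [Nonempty V] (v : V) : gRad G ≤ gEcc G v :=
  Finset.inf'_le _ (Finset.mem_univ v)

lemma SimpleGraph.Iso.gEcc_apply (φ : G ≃g H) (v : V) : gEcc H (φ v) = gEcc G v := by
  refine le_antisymm (Finset.sup_le fun u _ => ?_) (Finset.sup_le fun u _ => ?_)
  · rw [← φ.apply_symm_apply u, φ.dist_apply]
    exact dist_le_gEcc v _
  · rw [← φ.dist_apply]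
    exact dist_le_gEcc _ _

lemma SimpleGraph.Iso.apply_mem_gCenter_iff [Nonempty V] (φ : G ≃g G) (v : V) :
    φ v ∈ gCenter G ↔ v ∈ gCenter G := by
  change gEcc G (φ v) = gRad G ↔ gEcc G v = gRad G
  rw [φ.gEcc_apply]

end Eccentricity

section AddRoot

variable {T : SimpleGraph V} {c₁ c₂ : V}

@[simp]
lemma addRoot_adj_some_some {a b : V} :
    (addRoot T c₁ c₂).Adj (some a) (some b) ↔
      T.Adj a b ∧ ¬((a = c₁ ∨ a = c₂) ∧ (b = c₁ ∨ b = c₂)) := by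
  have := T.ne_of_adj (a := a) (b := b)
  simp [addRoot, adj_comm T b a]
  grind

@[simp]
lemma addRoot_adj_none_some {a : V} : (addRoot T c₁ c₂).Adj none (some a) ↔ a = c₁ ∨ a = c₂ := by
  simp [addRoot]

@[simp]
lemma addRoot_adj_some_none {a : V} : (addRoot T c₁ c₂).Adj (some a) none ↔ a = c₁ ∨ a = c₂ := by
  rw [adj_comm, addRoot_adj_none_some]

lemma addRoot_comm : addRoot T c₁ c₂ = addRoot T c₂ c₁ := by
  ext (_ | a) (_ | b) <;> simp [or_comm]

lemma addRoot_adj_some_some_iff_deleteEdges {a b : V} :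
    (addRoot T c₁ c₂).Adj (some a) (some b) ↔ (T.deleteEdges {s(c₁, c₂)}).Adj a b := by
  have := T.ne_of_adj (a := a) (b := b)
  simp only [addRoot_adj_some_some, deleteEdges_adj, Set.mem_singleton_iff, Sym2.eq_iff]
  grind

lemma adj_iff_addRoot_adj (hadj : T.Adj c₁ c₂) {a b : V} :
    T.Adj a b ↔ (addRoot T c₁ c₂).Adj (some a) (some b) ∨
      a ≠ b ∧ (addRoot T c₁ c₂).Adj none (some a) ∧ (addRoot T c₁ c₂).Adj none (some b) := by
  have := T.ne_of_adj (a := a) (b := b)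
  simp only [addRoot_adj_some_some, addRoot_adj_none_some]
  grind [hadj.symm]

def addRootSomeHom : T.deleteEdges {s(c₁, c₂)} →g addRoot T c₁ c₂ where
  toFun := some
  map_rel' := addRoot_adj_some_some_iff_deleteEdges.mpr

lemma exists_addRoot_iso_of_iso (φ : T ≃g T)
    (hφ : ∀ v, φ v = c₁ ∨ φ v = c₂ ↔ v = c₁ ∨ v = c₂) :
    ∃ ψ : addRoot T c₁ c₂ ≃g addRoot T c₁ c₂, ∀ v, ψ (some v) = some (φ v) :=
  ⟨⟨φ.toEquiv.optionCongr, by rintro (_ | a) (_ | b) <;> simp [hφ, φ.map_adj_iff]⟩, fun _ => rfl⟩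

lemma exists_iso_of_addRoot_iso (hadj : T.Adj c₁ c₂) (ψ : addRoot T c₁ c₂ ≃g addRoot T c₁ c₂)
    (hψ : ψ none = none) : ∃ φ : T ≃g T, ∀ v, ψ (some v) = some (φ v) := by
  set σ := Equiv.removeNone ψ.toEquiv
  have hσ : ∀ v, ψ (some v) = some (σ v) := fun v =>
    (Equiv.removeNone_some _ (Option.ne_none_iff_exists'.mp fun h =>
      Option.some_ne_none v (ψ.injective (h.trans hψ.symm)))).symm
  refine ⟨⟨σ, fun {a b} => ?_⟩, hσ⟩
  rw [adj_iff_addRoot_adj hadj, adj_iff_addRoot_adj hadj (a := a), ← hσ, ← hσ]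
  conv_lhs => rw [← hψ]
  simp only [ψ.map_adj_iff, σ.injective.ne_iff]

lemma exists_addRoot_walk_of_dist_lt (hT : T.Connected) (hadj : T.Adj c₁ c₂) {u : V}
    (h : T.dist c₁ u < T.dist c₂ u) :
    ∃ w : (addRoot T c₁ c₂).Walk none (some u), w.length = T.dist c₁ u + 1 := by
  obtain ⟨p, hp⟩ := exists_deleteEdges_walk_of_dist_lt hT hadj h
  exact ⟨.cons (addRoot_adj_none_some.mpr (.inl rfl)) (p.map addRootSomeHom),
    congrArg (· + 1) ((p.length_map _).trans hp)⟩

lemma addRoot_reachable_some_of_adj {a b : V} (h : T.Adj a b) :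
    (addRoot T c₁ c₂).Reachable (some a) (some b) := by
  by_cases hab : (addRoot T c₁ c₂).Adj (some a) (some b)
  · exact hab.reachable
  · simp only [addRoot_adj_some_some, h, true_and, not_not] at hab
    obtain ⟨ha, hb⟩ := hab
    exact (addRoot_adj_some_none.mpr ha).reachable.trans (addRoot_adj_none_some.mpr hb).reachable

lemma addRoot_reachable_some_of_reachable {a b : V} (h : T.Reachable a b) :
    (addRoot T c₁ c₂).Reachable (some a) (some b) := by
  obtain ⟨p⟩ := h
  induction p with
  | nil => rfl
  | cons h _ ih => exact (addRoot_reachable_some_of_adj h).trans ih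

lemma addRoot_connected (hT : T.Connected) : (addRoot T c₁ c₂).Connected := by
  have hsome : ∀ a b, (addRoot T c₁ c₂).Reachable (some a) (some b) := fun a b =>
    addRoot_reachable_some_of_reachable (hT a b)
  have hnone : (addRoot T c₁ c₂).Reachable none (some c₁) :=
    (addRoot_adj_none_some.mpr (.inl rfl)).reachable
  rw [connected_iff]
  refine ⟨?_, ⟨none⟩⟩
  rintro (_ | a) (_ | b)
  · rfl
  · exact hnone.trans (hsome c₁ b)
  · exact (hsome a c₁).trans hnone.symm
  · exact hsome a b

lemma dist_le_addRoot_dist (hT : T.Connected) (hadj : T.Adj c₁ c₂) (x u : V) :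
    T.dist x u ≤ (addRoot T c₁ c₂).dist (some x) (some u) := by
  let f : Option V → ℕ := fun z => T.dist x (z.elim c₁ id)
  have step : ∀ {a b}, T.Adj a b → T.dist x b ≤ T.dist x a + 1 := fun h => by
    rcases h.diff_dist_adj (u := x) with h | h | h <;> omega
  have hf : ∀ ⦃y z⦄, (addRoot T c₁ c₂).Adj y z → f z ≤ f y + 1 := by
    rintro (_ | a) (_ | b) h
    · simp at h
    · obtain rfl | rfl := addRoot_adj_none_some.mp h
      · simp [f]
      · exact step hadj
    · obtain rfl | rfl := addRoot_adj_some_none.mp h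
      · simp [f]
      · exact step hadj.symm
    · exact step (addRoot_adj_some_some.mp h).1
  simpa [f] using ((addRoot_connected hT) (some x) (some u)).le_add_dist hf

lemma dist_add_two_le_addRoot_dist (hT : T.IsTree) (hadj : T.Adj c₁ c₂) {v : V}
    (hv : (T.deleteEdges {s(c₁, c₂)}).Reachable c₂ v) :
    T.dist c₂ v + 2 ≤ (addRoot T c₁ c₂).dist (some c₁) (some v) := by
  classical
  set G := T.deleteEdges {s(c₁, c₂)}
  have hbridge : ¬G.Reachable c₁ c₂ :=
    isBridge_iff.mp (isAcyclic_iff_forall_adj_isBridge.mp hT.isAcyclic hadj)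
  -- In the new tree, the side of `c₁` (where `f` is `0`) meets the rest only at the root.
  let f : Option V → ℕ := fun z => z.elim 1 fun a => if G.Reachable c₁ a then 0 else T.dist c₂ a + 2
  have hf : ∀ ⦃y z⦄, (addRoot T c₁ c₂).Adj y z → f z ≤ f y + 1 := by
    rintro (_ | a) (_ | b) h
    · simp at h
    · obtain rfl | rfl := addRoot_adj_none_some.mp h <;> simp [f, hbridge]
    · simp [f]
    · have hab : G.Adj a b := addRoot_adj_some_some_iff_deleteEdges.mp h
      have hreach : G.Reachable c₁ a ↔ G.Reachable c₁ b :=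
        ⟨fun h => h.trans hab.reachable, fun h => h.trans hab.reachable.symm⟩
      have := (addRoot_adj_some_some.mp h).1.diff_dist_adj (u := c₂)
      simp only [f, Option.elim, hreach]
      split_ifs <;> omega
  have hfv : f (some v) = T.dist c₂ v + 2 := if_neg fun h => hbridge (h.trans hv.symm)
  simpa [f, hfv] using ((addRoot_connected hT.connected) (some c₁) (some v)).le_add_dist hf

end AddRoot

section RootIsFixed

variable [Fintype V] [Nonempty V] {T : SimpleGraph V} {c₁ c₂ : V}

lemma gEcc_eq_gRad_iff_of_gCenter_eq (hcen : gCenter T = {c₁, c₂}) (v : V) :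
    gEcc T v = gRad T ↔ v = c₁ ∨ v = c₂ := by
  change v ∈ gCenter T ↔ _
  rw [hcen]
  rfl

lemma exists_addRoot_walk_none (hT : T.IsTree) (hadj : T.Adj c₁ c₂)
    (hcen : gCenter T = {c₁, c₂}) (u : V) :
    ∃ w : (addRoot T c₁ c₂).Walk none (some u), w.length ≤ gRad T := by
  have hd : ∀ c, c = c₁ ∨ c = c₂ → T.dist c u ≤ gRad T := fun c hc =>
    (gEcc_eq_gRad_iff_of_gCenter_eq hcen c).mpr hc ▸ dist_le_gEcc c u
  have h₁ := hd c₁ (.inl rfl)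
  have h₂ := hd c₂ (.inr rfl)
  have := hT.dist_eq_dist_add_one_of_adj u hadj
  simp only [dist_comm (u := u)] at this
  rcases this with h | h
  · obtain ⟨w, hw⟩ := exists_addRoot_walk_of_dist_lt hT.connected hadj.symm (u := u) (by omega)
    rw [addRoot_comm]
    exact ⟨w, by omega⟩
  · obtain ⟨w, hw⟩ := exists_addRoot_walk_of_dist_lt hT.connected hadj (u := u) (by omega)
    exact ⟨w, by omega⟩

lemma gEcc_addRoot_none_le (hT : T.IsTree) (hadj : T.Adj c₁ c₂)
    (hcen : gCenter T = {c₁, c₂}) : gEcc (addRoot T c₁ c₂) none ≤ gRad T := by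
  refine Finset.sup_le ?_
  rintro (_ | u) -
  · simp
  · obtain ⟨w, hw⟩ := exists_addRoot_walk_none hT hadj hcen u
    exact (dist_le w).trans hw

lemma gRad_lt_gEcc_addRoot_left (hT : T.IsTree) (hadj : T.Adj c₁ c₂)
    (hcen : gCenter T = {c₁, c₂}) : gRad T < gEcc (addRoot T c₁ c₂) (some c₁) := by
  have hcen' := gEcc_eq_gRad_iff_of_gCenter_eq hcen
  obtain ⟨v, hv⟩ := exists_dist_eq_gEcc (G := T) c₁
  rw [(hcen' c₁).mpr (.inl rfl)] at hv
  have h₂ : T.dist c₂ v ≤ gRad T := (hcen' c₂).mpr (.inr rfl) ▸ dist_le_gEcc c₂ v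
  have := hT.dist_eq_dist_add_one_of_adj v hadj
  simp only [dist_comm (u := v)] at this
  obtain ⟨p, -⟩ := exists_deleteEdges_walk_of_dist_lt hT.connected hadj.symm (u := v) (by omega)
  have hreach : (T.deleteEdges {s(c₁, c₂)}).Reachable c₂ v := by
    rw [Sym2.eq_swap]
    exact ⟨p⟩
  calc gRad T < T.dist c₂ v + 2 := by omega
    _ ≤ (addRoot T c₁ c₂).dist (some c₁) (some v) := dist_add_two_le_addRoot_dist hT hadj hreach
    _ ≤ gEcc (addRoot T c₁ c₂) (some c₁) := dist_le_gEcc _ _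

lemma gRad_lt_gEcc_addRoot (hT : T.IsTree) (hadj : T.Adj c₁ c₂)
    (hcen : gCenter T = {c₁, c₂}) (x : V) : gRad T < gEcc (addRoot T c₁ c₂) (some x) := by
  by_cases hx : x = c₁ ∨ x = c₂
  · rcases hx with rfl | rfl
    · exact gRad_lt_gEcc_addRoot_left hT hadj hcen
    · rw [addRoot_comm]
      exact gRad_lt_gEcc_addRoot_left hT hadj.symm (hcen.trans (Set.pair_comm _ _))
  · obtain ⟨u, hu⟩ := exists_dist_eq_gEcc (G := T) x
    have hlt : gRad T < gEcc T x := (gRad_le_gEcc x).lt_of_ne fun h =>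
      hx ((gEcc_eq_gRad_iff_of_gCenter_eq hcen x).mp h.symm)
    calc gRad T < T.dist x u := hu ▸ hlt
      _ ≤ (addRoot T c₁ c₂).dist (some x) (some u) := dist_le_addRoot_dist hT.connected hadj x u
      _ ≤ gEcc (addRoot T c₁ c₂) (some x) := dist_le_gEcc _ _

lemma addRoot_iso_apply_none (hT : T.IsTree) (hadj : T.Adj c₁ c₂)
    (hcen : gCenter T = {c₁, c₂}) (ψ : addRoot T c₁ c₂ ≃g addRoot T c₁ c₂) : ψ none = none := by
  by_contra h
  obtain ⟨x, hx⟩ := Option.ne_none_iff_exists'.mp h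
  have hecc := ψ.gEcc_apply none
  rw [hx] at hecc
  have := gRad_lt_gEcc_addRoot hT hadj hcen x
  have := gEcc_addRoot_none_le hT hadj hcen
  omega

end RootIsFixed

section Distinguishing

variable {G : SimpleGraph V} {H : SimpleGraph (Option V)}

lemma IsDistinguishing.option_elim {r : ℕ} {f : V → Fin r} (hf : IsDistinguishing G f)
    (hfix : ∀ ψ : H ≃g H, ψ none = none)
    (hres : ∀ ψ : H ≃g H, ∃ φ : G ≃g G, ∀ v, ψ (some v) = some (φ v)) (i : Fin r) :
    IsDistinguishing H (fun x => x.elim i f) := by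
  intro ψ hψ
  obtain ⟨φ, hφ⟩ := hres ψ
  have hid := hf φ fun v => by simpa [hφ] using hψ (some v)
  rintro (_ | v)
  · exact hfix ψ
  · rw [hφ, hid]

lemma IsDistinguishing.comp_some {r : ℕ} {f : Option V → Fin r} (hf : IsDistinguishing H f)
    (hfix : ∀ ψ : H ≃g H, ψ none = none)
    (hext : ∀ φ : G ≃g G, ∃ ψ : H ≃g H, ∀ v, ψ (some v) = some (φ v)) :
    IsDistinguishing G (f ∘ some) := by
  intro φ hφ v
  obtain ⟨ψ, hψ⟩ := hext φ
  have hid := hf ψ fun x => by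
    cases x with
    | none => rw [hfix ψ]
    | some a => rw [hψ]; exact hφ a
  exact Option.some_injective _ ((hψ v).symm.trans (hid (some v)))

lemma distinguishingNumber_eq_of_option_iso [Nonempty V] (hfix : ∀ ψ : H ≃g H, ψ none = none)
    (hres : ∀ ψ : H ≃g H, ∃ φ : G ≃g G, ∀ v, ψ (some v) = some (φ v))
    (hext : ∀ φ : G ≃g G, ∃ ψ : H ≃g H, ∀ v, ψ (some v) = some (φ v)) :
    distinguishingNumber G = distinguishingNumber H := by
  unfold distinguishingNumber
  congr 1
  ext r
  exact ⟨fun ⟨f, hf⟩ => ⟨_, hf.option_elim hfix hres (f (Classical.arbitrary V))⟩,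
    fun ⟨f, hf⟩ => ⟨_, hf.comp_some hfix hext⟩⟩

end Distinguishing

theorem stmt18_general [Fintype V] [Nonempty V] (T : SimpleGraph V) (hT : T.IsTree)
    (c₁ c₂ : V) (hadj : T.Adj c₁ c₂)
    (hcen : gCenter T = {c₁, c₂}) :
    distinguishingNumber T = distinguishingNumber (addRoot T c₁ c₂) := by
  have hfix := addRoot_iso_apply_none hT hadj hcen
  refine distinguishingNumber_eq_of_option_iso hfix
    (fun ψ => exists_iso_of_addRoot_iso hadj ψ (hfix ψ)) (fun φ => exists_addRoot_iso_of_iso φ ?_)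
  intro v
  simpa [hcen] using φ.apply_mem_gCenter_iff v

theorem stmt18 [Fintype V] [Nonempty V] (T : SimpleGraph V) (hT : T.IsTree)
    (c₁ c₂ : V) (hne : c₁ ≠ c₂) (hadj : T.Adj c₁ c₂)
    (hcen : gCenter T = {c₁, c₂}) :
    distinguishingNumber T = distinguishingNumber (addRoot T c₁ c₂) :=
  stmt18_general T hT c₁ c₂ hadj hcen
end
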